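/- Let 1 ≤ p < ∞, R, T > 0, N ≥ 1 an integer, f : ℝ^N × ℝ^N → ℝ^N a C^1 function, and fix r ∈ [0,R]. Then the map 𝒯(·,·,r) : C([−R,T],ℝ^N) × C([−R,0],ℝ^N) → W^{1,p}([−R,T],ℝ^N) is continuously Fréchet differentiable with Fréchet derivative D_{y,φ}𝒯(y,φ,r) = A_{y,φ,r}, where [A_{y,φ,r}(η,χ)](t) = 0 for t ∈ [−R,0] and [A_{y,φ,r}(η,χ)](t) = ∫_0^t Df((y+φ̄)(s),(y+φ̄)(s−r))((η+χ̄)(s),(η+χ̄)(s−r)) ds for t ∈ [0,T]. Moreover the operator-norm estimate ‖A_{y,φ,r} − A_{y_0,φ_0,r}‖ ≤ 2 T^{1/p} sup_{t∈[0,T]} ‖Df((y+φ̄)(t),(y+φ̄)(t−r)) − Df((y_0+φ̄_0)(t),(y_0+φ̄_0)(t−r))‖ holds. -/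

import Mathlib

open MeasureTheory Set ENNReal

noncomputable section

/-- `ℝ^N` with a fixed norm (the Euclidean one). -/
abbrev Vec (N : ℕ) : Type := EuclideanSpace ℝ (Fin N)

/-- `x ∈ W^{1,p}([a,b],ℝ^N)`: `x` is absolutely continuous on `[a,b]` (equivalently, it is the
integral of its almost-everywhere derivative `x'`), and `x' ∈ L^p([a,b],ℝ^N)`. -/
def HasW1pOn {N : ℕ} (x x' : ℝ → Vec N) (p a b : ℝ) : Prop :=
  (∀ t ∈ Set.Icc a b, x t = x a + ∫ s in a..t, x' s) ∧
    IntervalIntegrable x' volume a b ∧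
    MemLp x' (ENNReal.ofReal p) (volume.restrict (Set.Icc a b))

/-- The `W^{1,p}[a,b]`-norm, computed from the value `v = x a` at the left endpoint and the
almost-everywhere derivative `d = x'`:  `(|x(a)|^p + ∫_a^b |x'|^p)^(1/p)`. -/
def wNorm {N : ℕ} (p a b : ℝ) (v : Vec N) (d : ℝ → Vec N) : ℝ :=
  (‖v‖ ^ p + ∫ t in a..b, ‖d t‖ ^ p) ^ (1 / p)

/-- The supremum norm `‖x‖_{C[a,b]}`. -/
def cNorm {N : ℕ} (a b : ℝ) (x : ℝ → Vec N) : ℝ :=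
  sSup ((fun t => ‖x t‖) '' Set.Icc a b)

/-- The static prolongation `φ̄` of `φ : [−R,0] → ℝ^N`. -/
def prolong {N : ℕ} (φ : ℝ → Vec N) : ℝ → Vec N := fun t => if t ≤ 0 then φ t else φ 0

/-- `ρ(y,φ,r,t) = ((y+φ̄)(t), (y+φ̄)(t−r)) ∈ ℝ^N × ℝ^N`. -/
def rho {N : ℕ} (y φ : ℝ → Vec N) (r t : ℝ) : Vec N × Vec N :=
  ((y + prolong φ) t, (y + prolong φ) (t - r))

/-- `𝒯(y,φ,r)(t) = 0` for `t ≤ 0` and `= ∫_0^t f((y+φ̄)(s),(y+φ̄)(s−r)) ds` for `t ∈ [0,T]`. -/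
def Tmap {N : ℕ} (f : Vec N × Vec N → Vec N) (y φ : ℝ → Vec N) (r : ℝ) : ℝ → Vec N :=
  fun t => if t ≤ 0 then 0
    else ∫ s in (0:ℝ)..t, f ((y + prolong φ) s, (y + prolong φ) (s - r))

/-- The almost-everywhere derivative of `𝒯(y,φ,r)`. -/
def Tderiv {N : ℕ} (f : Vec N × Vec N → Vec N) (y φ : ℝ → Vec N) (r : ℝ) : ℝ → Vec N :=
  fun t => if t ≤ 0 then 0 else f ((y + prolong φ) t, (y + prolong φ) (t - r))

/-- `[A_{y,φ,r}(η,χ)](t) = 0` for `t ≤ 0` and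
`= ∫_0^t Df((y+φ̄)(s),(y+φ̄)(s−r)) ((η+χ̄)(s),(η+χ̄)(s−r)) ds` for `t ∈ [0,T]`. -/
def Afun {N : ℕ} (f : Vec N × Vec N → Vec N) (y φ η χ : ℝ → Vec N) (r : ℝ) : ℝ → Vec N :=
  fun t => if t ≤ 0 then 0 else ∫ s in (0:ℝ)..t, fderiv ℝ f (rho y φ r s) (rho η χ r s)

/-- The almost-everywhere derivative of `A_{y,φ,r}(η,χ)`. -/
def Afun' {N : ℕ} (f : Vec N × Vec N → Vec N) (y φ η χ : ℝ → Vec N) (r : ℝ) : ℝ → Vec N :=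
  fun t => if t ≤ 0 then 0 else fderiv ℝ f (rho y φ r t) (rho η χ r t)

/-! Every function involved vanishes on `[-R, 0]` and is, on `[0, T]`, the primitive of a
continuous integrand along the curve `t ↦ ρ(y, φ, r, t)`. Such a function lies in `W^{1,p}` by the
fundamental theorem of calculus, and its `W^{1,p}` norm is at most `T^{1/p}` times the sup of its
derivative on `(0, T]`. All four claims therefore reduce to pointwise bounds along the compact
curve `ρ([0, T])`: the remainder `f(ρ + σ) - f(ρ) - Df(ρ) σ` is `o(‖σ‖)` by the mean value
inequality, and `Df(ρ) - Df(ρ₀)` is small because `Df` is uniformly continuous near that curve. -/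

lemma ite_nonpos_eq_indicator {E : Type*} [Zero E] (g : ℝ → E) :
    (fun t => if t ≤ 0 then 0 else g t) = (Ioi 0).indicator g := by
  ext t
  by_cases ht : t ≤ 0
  · rw [if_pos ht, indicator_of_notMem (notMem_Ioi.mpr ht)]
  · rw [if_neg ht, indicator_of_mem (mem_Ioi.mpr (not_le.mp ht))]

section IndicatorIoi

variable {E : Type*} [NormedAddCommGroup E]

lemma intervalIntegral_indicator_Ioi [NormedSpace ℝ E] {a t : ℝ} (ha : a ≤ 0) (hat : a ≤ t)
    (g : ℝ → E) :
    ∫ s in a..t, (Ioi 0).indicator g s =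
      (Ioi 0).indicator (fun t => ∫ s in (0 : ℝ)..t, g s) t := by
  rw [intervalIntegral.integral_of_le hat, integral_indicator measurableSet_Ioi,
    Measure.restrict_restrict measurableSet_Ioi, inter_comm, Ioc_inter_Ioi, sup_eq_right.mpr ha]
  rcases le_or_gt t 0 with ht | ht
  · rw [Ioc_eq_empty (not_lt.mpr ht), Measure.restrict_empty, integral_zero_measure,
      indicator_of_notMem (notMem_Ioi.mpr ht)]
  · rw [indicator_of_mem (mem_Ioi.mpr ht), intervalIntegral.integral_of_le ht.le]

lemma aestronglyMeasurable_indicator_Ioi {a b : ℝ} {g : ℝ → E}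
    (hg : ContinuousOn g (Icc 0 b)) :
    AEStronglyMeasurable ((Ioi 0).indicator g) (volume.restrict (Icc a b)) := by
  rw [aestronglyMeasurable_indicator_iff measurableSet_Ioi,
    Measure.restrict_restrict measurableSet_Ioi]
  have hsub : Ioi 0 ∩ Icc a b ⊆ Icc 0 b := fun t ht => ⟨le_of_lt (mem_Ioi.mp ht.1), ht.2.2⟩
  exact (hg.aestronglyMeasurable measurableSet_Icc).mono_measure
    (Measure.restrict_mono hsub le_rfl)

end IndicatorIoi

lemma hasW1pOn_indicator_integral {N : ℕ} {a b p : ℝ} (ha : a ≤ 0) (hb : 0 ≤ b)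
    {g : ℝ → Vec N} (hg : ContinuousOn g (Icc 0 b)) :
    HasW1pOn ((Ioi 0).indicator fun t => ∫ s in (0 : ℝ)..t, g s) ((Ioi 0).indicator g)
      p a b := by
  obtain ⟨M, hM⟩ := isCompact_Icc.exists_bound_of_continuousOn hg
  have hbound : ∀ᵐ t ∂volume.restrict (Icc a b), ‖(Ioi 0).indicator g t‖ ≤ max M 0 := by
    refine (ae_restrict_iff' measurableSet_Icc).mpr (ae_of_all _ fun t ht => ?_)
    by_cases ht0 : 0 < t
    · rw [indicator_of_mem (mem_Ioi.mpr ht0)]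
      exact (hM t ⟨ht0.le, ht.2⟩).trans (le_max_left _ _)
    · rw [indicator_of_notMem (mt mem_Ioi.mp ht0), norm_zero]
      exact le_max_right _ _
  have hmeas : AEStronglyMeasurable ((Ioi 0).indicator g) (volume.restrict (Icc a b)) :=
    aestronglyMeasurable_indicator_Ioi hg
  refine ⟨fun t ht => ?_, ?_, MemLp.of_bound hmeas _ hbound⟩
  · rw [indicator_of_notMem (notMem_Ioi.mpr ha), zero_add,
      intervalIntegral_indicator_Ioi ha ht.1]
  · exact ((IntegrableOn.of_bound measure_Icc_lt_top hmeas _ hbound).mono_set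
      (uIcc_of_le (ha.trans hb)).le).intervalIntegrable

lemma wNorm_zero_le_of_norm_le {N : ℕ} {a b p M : ℝ} (hp : 0 < p) (ha : a ≤ 0) (hb : 0 < b)
    {d : ℝ → Vec N} (hd : ∀ t ≤ 0, d t = 0) (hdM : ∀ t ∈ Ioc 0 b, ‖d t‖ ≤ M) :
    wNorm p a b 0 d ≤ b ^ (1 / p) * M := by
  have hM : 0 ≤ M := (norm_nonneg _).trans (hdM b ⟨hb, le_rfl⟩)
  have hsupp : ∫ t in a..b, ‖d t‖ ^ p = ∫ t in (0 : ℝ)..b, ‖d t‖ ^ p := by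
    rw [intervalIntegral.integral_congr (g := (Ioi 0).indicator fun t => ‖d t‖ ^ p),
      intervalIntegral_indicator_Ioi ha (ha.trans hb.le), indicator_of_mem (mem_Ioi.mpr hb)]
    intro t _
    dsimp only
    by_cases ht : 0 < t
    · rw [indicator_of_mem (mem_Ioi.mpr ht)]
    · rw [indicator_of_notMem (mt mem_Ioi.mp ht), hd t (not_lt.mp ht), norm_zero,
        Real.zero_rpow hp.ne']
  have hbound : ∫ t in (0 : ℝ)..b, ‖d t‖ ^ p ≤ M ^ p * b := by
    refine (Real.le_norm_self _).trans ?_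
    have := intervalIntegral.norm_integral_le_of_norm_le_const (a := 0) (b := b)
      (f := fun t => ‖d t‖ ^ p) (C := M ^ p) fun t ht => by
        rw [uIoc_of_le hb.le] at ht
        rw [Real.norm_of_nonneg (by positivity)]
        exact Real.rpow_le_rpow (norm_nonneg _) (hdM t ht) hp.le
    rwa [sub_zero, abs_of_pos hb] at this
  rw [wNorm, norm_zero, Real.zero_rpow hp.ne', zero_add, hsupp]
  calc (∫ t in (0 : ℝ)..b, ‖d t‖ ^ p) ^ (1 / p)
      ≤ (M ^ p * b) ^ (1 / p) :=
        Real.rpow_le_rpow (intervalIntegral.integral_nonneg hb.le fun t _ => by positivity)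
          hbound (by positivity)
    _ = b ^ (1 / p) * M := by
        rw [Real.mul_rpow (by positivity) hb.le, ← Real.rpow_mul hM, mul_one_div_cancel hp.ne',
          Real.rpow_one, mul_comm]

lemma IsCompact.exists_forall_dist_le_of_continuous {X Y : Type*} [PseudoMetricSpace X]
    [PseudoMetricSpace Y] {K : Set X} (hK : IsCompact K) {g : X → Y} (hg : Continuous g)
    {ε : ℝ} (hε : 0 < ε) :
    ∃ δ > 0, ∀ x ∈ K, ∀ z, dist z x ≤ δ → dist (g z) (g x) ≤ ε := by
  obtain ⟨δ, hδ, hδε⟩ := Metric.mem_uniformity_dist.mp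
    (hK.uniformContinuousAt_of_continuousAt g (fun x _ => hg.continuousAt)
      (Metric.dist_mem_uniformity hε))
  refine ⟨δ / 2, half_pos hδ, fun x hx z hz => ?_⟩
  rw [dist_comm] at hz ⊢
  exact (hδε (a := x) (b := z) (by linarith) hx).le

section Delay

variable {N : ℕ} {p R T r : ℝ} {f : Vec N × Vec N → Vec N} {y φ y0 φ0 η χ : ℝ → Vec N}

lemma prolong_eq_comp_min (φ : ℝ → Vec N) : prolong φ = fun t => φ (min t 0) := by
  ext1 t
  by_cases ht : t ≤ 0
  · rw [prolong, if_pos ht, min_eq_left ht]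
  · rw [prolong, if_neg ht, min_eq_right (not_le.mp ht).le]

lemma prolong_add (φ χ : ℝ → Vec N) : prolong (φ + χ) = prolong φ + prolong χ := by
  simp only [prolong_eq_comp_min]
  rfl

lemma prolong_sub (φ χ : ℝ → Vec N) : prolong (φ - χ) = prolong φ - prolong χ := by
  simp only [prolong_eq_comp_min]
  rfl

lemma rho_add (y φ η χ : ℝ → Vec N) (r t : ℝ) :
    rho (y + η) (φ + χ) r t = rho y φ r t + rho η χ r t := by
  simp only [rho, prolong_add, Pi.add_apply, Prod.mk_add_mk, add_add_add_comm]

lemma rho_sub (y φ η χ : ℝ → Vec N) (r t : ℝ) :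
    rho (y - η) (φ - χ) r t = rho y φ r t - rho η χ r t := by
  simp only [rho, prolong_sub, Pi.add_apply, Pi.sub_apply, Prod.mk_sub_mk, add_sub_add_comm]

lemma continuousOn_add_prolong (hR : 0 ≤ R) (hy : ContinuousOn y (Icc (-R) T))
    (hφ : ContinuousOn φ (Icc (-R) 0)) : ContinuousOn (y + prolong φ) (Icc (-R) T) := by
  rw [prolong_eq_comp_min]
  exact hy.add (hφ.comp (continuous_id.min continuous_const).continuousOn
    fun t ht => ⟨le_min ht.1 (neg_nonpos.mpr hR), min_le_right t 0⟩)

lemma continuousOn_rho (hr : r ∈ Icc 0 R) (hy : ContinuousOn y (Icc (-R) T))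
    (hφ : ContinuousOn φ (Icc (-R) 0)) : ContinuousOn (rho y φ r) (Icc 0 T) := by
  have hu := continuousOn_add_prolong (hr.1.trans hr.2) hy hφ
  refine (hu.mono fun t ht => ⟨by linarith [ht.1, hr.1, hr.2], ht.2⟩).prodMk
    (hu.comp (continuous_sub_right r).continuousOn fun t ht => ?_)
  exact ⟨by linarith [ht.1, hr.2], by linarith [ht.2, hr.1]⟩

lemma norm_le_cNorm {a b : ℝ} {x : ℝ → Vec N} (hx : ContinuousOn x (Icc a b)) {t : ℝ}
    (ht : t ∈ Icc a b) : ‖x t‖ ≤ cNorm a b x :=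
  le_csSup (isCompact_Icc.bddAbove_image hx.norm) ⟨t, ht, rfl⟩

lemma norm_rho_le (hr : r ∈ Icc 0 R) (hη : ContinuousOn η (Icc (-R) T))
    (hχ : ContinuousOn χ (Icc (-R) 0)) {t : ℝ} (ht : t ∈ Icc 0 T) :
    ‖rho η χ r t‖ ≤ cNorm (-R) T η + cNorm (-R) 0 χ := by
  have hR : -R ≤ 0 := by linarith [hr.1, hr.2]
  have hpath : ∀ s ∈ Icc (-R) T, ‖(η + prolong χ) s‖ ≤ cNorm (-R) T η + cNorm (-R) 0 χ := by
    intro s hs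
    rw [Pi.add_apply, prolong_eq_comp_min]
    exact (norm_add_le _ _).trans (add_le_add (norm_le_cNorm hη hs)
      (norm_le_cNorm hχ ⟨le_min hs.1 hR, min_le_right s 0⟩))
  exact max_le (hpath t ⟨by linarith [ht.1], ht.2⟩)
    (hpath (t - r) ⟨by linarith [ht.1, hr.2], by linarith [ht.2, hr.1]⟩)

lemma Tmap_of_nonpos {t : ℝ} (ht : t ≤ 0) : Tmap f y φ r t = 0 := if_pos ht

lemma Tderiv_of_nonpos {t : ℝ} (ht : t ≤ 0) : Tderiv f y φ r t = 0 := if_pos ht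

lemma Afun_of_nonpos {t : ℝ} (ht : t ≤ 0) : Afun f y φ η χ r t = 0 := if_pos ht

lemma Afun'_of_nonpos {t : ℝ} (ht : t ≤ 0) : Afun' f y φ η χ r t = 0 := if_pos ht

lemma Tderiv_of_pos {t : ℝ} (ht : 0 < t) : Tderiv f y φ r t = f (rho y φ r t) :=
  if_neg (not_le.mpr ht)

lemma Afun'_of_pos {t : ℝ} (ht : 0 < t) :
    Afun' f y φ η χ r t = fderiv ℝ f (rho y φ r t) (rho η χ r t) :=
  if_neg (not_le.mpr ht)

lemma Tmap_eq_indicator (f : Vec N × Vec N → Vec N) (y φ : ℝ → Vec N) (r : ℝ) :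
    Tmap f y φ r = (Ioi 0).indicator fun t => ∫ s in (0 : ℝ)..t, f (rho y φ r s) :=
  ite_nonpos_eq_indicator _

lemma Tderiv_eq_indicator (f : Vec N × Vec N → Vec N) (y φ : ℝ → Vec N) (r : ℝ) :
    Tderiv f y φ r = (Ioi 0).indicator fun t => f (rho y φ r t) :=
  ite_nonpos_eq_indicator _

lemma Afun_eq_indicator (f : Vec N × Vec N → Vec N) (y φ η χ : ℝ → Vec N) (r : ℝ) :
    Afun f y φ η χ r =
      (Ioi 0).indicator fun t => ∫ s in (0 : ℝ)..t, fderiv ℝ f (rho y φ r s) (rho η χ r s) :=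
  ite_nonpos_eq_indicator _

lemma Afun'_eq_indicator (f : Vec N × Vec N → Vec N) (y φ η χ : ℝ → Vec N) (r : ℝ) :
    Afun' f y φ η χ r = (Ioi 0).indicator fun t => fderiv ℝ f (rho y φ r t) (rho η χ r t) :=
  ite_nonpos_eq_indicator _

lemma hasW1pOn_Tmap (hT : 0 ≤ T) (hf : Continuous f) (hr : r ∈ Icc 0 R)
    (hy : ContinuousOn y (Icc (-R) T)) (hφ : ContinuousOn φ (Icc (-R) 0)) :
    HasW1pOn (Tmap f y φ r) (Tderiv f y φ r) p (-R) T := by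
  rw [Tmap_eq_indicator, Tderiv_eq_indicator]
  exact hasW1pOn_indicator_integral (by linarith [hr.1, hr.2]) hT
    (hf.comp_continuousOn (continuousOn_rho hr hy hφ))

lemma hasW1pOn_Afun (hT : 0 ≤ T) (hDf : Continuous (fderiv ℝ f)) (hr : r ∈ Icc 0 R)
    (hy : ContinuousOn y (Icc (-R) T)) (hφ : ContinuousOn φ (Icc (-R) 0))
    (hη : ContinuousOn η (Icc (-R) T)) (hχ : ContinuousOn χ (Icc (-R) 0)) :
    HasW1pOn (Afun f y φ η χ r) (Afun' f y φ η χ r) p (-R) T := by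
  rw [Afun_eq_indicator, Afun'_eq_indicator]
  exact hasW1pOn_indicator_integral (by linarith [hr.1, hr.2]) hT
    ((hDf.comp_continuousOn (continuousOn_rho hr hy hφ)).clm_apply (continuousOn_rho hr hη hχ))

theorem exists_wNorm_Tmap_remainder_le (hp : 0 < p) (hT : 0 < T) (hf : ContDiff ℝ 1 f)
    (hr : r ∈ Icc 0 R) (hy0 : ContinuousOn y0 (Icc (-R) T))
    (hφ0 : ContinuousOn φ0 (Icc (-R) 0)) {ε : ℝ} (hε : 0 < ε) :
    ∃ δ > 0, ∀ η χ : ℝ → Vec N, ContinuousOn η (Icc (-R) T) → ContinuousOn χ (Icc (-R) 0) →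
      cNorm (-R) T η + cNorm (-R) 0 χ ≤ δ →
      wNorm p (-R) T
          (Tmap f (y0 + η) (φ0 + χ) r (-R) - Tmap f y0 φ0 r (-R) - Afun f y0 φ0 η χ r (-R))
          (fun t => Tderiv f (y0 + η) (φ0 + χ) r t - Tderiv f y0 φ0 r t -
            Afun' f y0 φ0 η χ r t) ≤
        ε * (cNorm (-R) T η + cNorm (-R) 0 χ) := by
  have hR : -R ≤ 0 := by linarith [hr.1, hr.2]
  have hTp : 0 < T ^ (1 / p) := Real.rpow_pos_of_pos hT _
  have hK := isCompact_Icc.image_of_continuousOn (continuousOn_rho hr hy0 hφ0)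
  obtain ⟨δ, hδ, hDf⟩ := hK.exists_forall_dist_le_of_continuous
    (hf.continuous_fderiv one_ne_zero) (div_pos hε hTp)
  refine ⟨δ, hδ, fun η χ hη hχ hsmall => ?_⟩
  set C := cNorm (-R) T η + cNorm (-R) 0 χ
  rw [Tmap_of_nonpos hR, Tmap_of_nonpos hR, Afun_of_nonpos hR, sub_self, sub_self]
  refine (wNorm_zero_le_of_norm_le hp hR hT (M := ε / T ^ (1 / p) * C)
    (fun t ht => ?_) (fun t ht => ?_)).trans_eq (by field_simp)
  · rw [Tderiv_of_nonpos ht, Tderiv_of_nonpos ht, Afun'_of_nonpos ht, sub_self, sub_self]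
  · have ht' : t ∈ Icc 0 T := Ioc_subset_Icc_self ht
    have hσ := norm_rho_le hr hη hχ ht'
    set x := rho y0 φ0 r t
    set σ := rho η χ r t
    rw [Tderiv_of_pos ht.1, Tderiv_of_pos ht.1, Afun'_of_pos ht.1, rho_add]
    have hball : ∀ z ∈ Metric.closedBall x δ,
        ‖fderiv ℝ f z - fderiv ℝ f x‖ ≤ ε / T ^ (1 / p) := fun z hz => by
      rw [← dist_eq_norm]
      exact hDf x ⟨t, ht', rfl⟩ z hz
    have hmv := (convex_closedBall x δ).norm_image_sub_le_of_norm_fderiv_le'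
      (fun z _ => (hf.differentiable one_ne_zero).differentiableAt) hball
      (Metric.mem_closedBall_self hδ.le)
      (mem_closedBall_iff_norm.mpr (by rw [add_sub_cancel_left]; exact hσ.trans hsmall))
    rw [add_sub_cancel_left] at hmv
    exact hmv.trans (mul_le_mul_of_nonneg_left hσ (by positivity))

lemma wNorm_Afun_sub_le (hp : 0 < p) (hT : 0 < T) (hr : r ∈ Icc 0 R)
    (hη : ContinuousOn η (Icc (-R) T)) (hχ : ContinuousOn χ (Icc (-R) 0)) {K : ℝ}
    (hK : ∀ t ∈ Icc 0 T, ‖fderiv ℝ f (rho y φ r t) - fderiv ℝ f (rho y0 φ0 r t)‖ ≤ K) :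
    wNorm p (-R) T (Afun f y φ η χ r (-R) - Afun f y0 φ0 η χ r (-R))
        (fun t => Afun' f y φ η χ r t - Afun' f y0 φ0 η χ r t) ≤
      T ^ (1 / p) * (K * (cNorm (-R) T η + cNorm (-R) 0 χ)) := by
  have hR : -R ≤ 0 := by linarith [hr.1, hr.2]
  rw [Afun_of_nonpos hR, Afun_of_nonpos hR, sub_self]
  refine wNorm_zero_le_of_norm_le hp hR hT (fun t ht => ?_) (fun t ht => ?_)
  · rw [Afun'_of_nonpos ht, Afun'_of_nonpos ht, sub_self]
  · have ht' : t ∈ Icc 0 T := Ioc_subset_Icc_self ht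
    rw [Afun'_of_pos ht.1, Afun'_of_pos ht.1, ← sub_apply]
    exact (ContinuousLinearMap.le_opNorm _ _).trans (mul_le_mul (hK t ht')
      (norm_rho_le hr hη hχ ht') (norm_nonneg _) ((norm_nonneg _).trans (hK t ht')))

lemma wNorm_Afun_sub_le_sSup (hp : 0 < p) (hT : 0 < T) (hDf : Continuous (fderiv ℝ f))
    (hr : r ∈ Icc 0 R) (hy : ContinuousOn y (Icc (-R) T)) (hφ : ContinuousOn φ (Icc (-R) 0))
    (hy0 : ContinuousOn y0 (Icc (-R) T)) (hφ0 : ContinuousOn φ0 (Icc (-R) 0))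
    (hη : ContinuousOn η (Icc (-R) T)) (hχ : ContinuousOn χ (Icc (-R) 0)) :
    wNorm p (-R) T (Afun f y φ η χ r (-R) - Afun f y0 φ0 η χ r (-R))
        (fun t => Afun' f y φ η χ r t - Afun' f y0 φ0 η χ r t) ≤
      2 * T ^ (1 / p) *
        sSup ((fun t => ‖fderiv ℝ f (rho y φ r t) - fderiv ℝ f (rho y0 φ0 r t)‖) '' Icc 0 T) *
        (cNorm (-R) T η + cNorm (-R) 0 χ) := by
  set S := sSup ((fun t => ‖fderiv ℝ f (rho y φ r t) - fderiv ℝ f (rho y0 φ0 r t)‖) '' Icc 0 T)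
  have hS : ∀ t ∈ Icc 0 T, ‖fderiv ℝ f (rho y φ r t) - fderiv ℝ f (rho y0 φ0 r t)‖ ≤ S :=
    fun t ht => le_csSup (isCompact_Icc.bddAbove_image
      ((hDf.comp_continuousOn (continuousOn_rho hr hy hφ)).sub
        (hDf.comp_continuousOn (continuousOn_rho hr hy0 hφ0))).norm) ⟨t, ht, rfl⟩
  have hS0 : 0 ≤ S := (norm_nonneg _).trans (hS 0 ⟨le_rfl, hT.le⟩)
  have hC0 : 0 ≤ cNorm (-R) T η + cNorm (-R) 0 χ :=
    (norm_nonneg _).trans (norm_rho_le hr hη hχ ⟨le_rfl, hT.le⟩)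
  calc _ ≤ T ^ (1 / p) * (S * (cNorm (-R) T η + cNorm (-R) 0 χ)) :=
        wNorm_Afun_sub_le hp hT hr hη hχ hS
    _ ≤ _ := by
        rw [mul_assoc 2, mul_assoc 2, mul_assoc (T ^ (1 / p))]
        exact le_mul_of_one_le_left (by positivity) one_le_two

theorem exists_wNorm_Afun_sub_le (hp : 0 < p) (hT : 0 < T) (hDf : Continuous (fderiv ℝ f))
    (hr : r ∈ Icc 0 R) (hy0 : ContinuousOn y0 (Icc (-R) T))
    (hφ0 : ContinuousOn φ0 (Icc (-R) 0)) {ε : ℝ} (hε : 0 < ε) :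
    ∃ δ > 0, ∀ y φ : ℝ → Vec N, ContinuousOn y (Icc (-R) T) → ContinuousOn φ (Icc (-R) 0) →
      cNorm (-R) T (fun t => y t - y0 t) + cNorm (-R) 0 (fun t => φ t - φ0 t) ≤ δ →
      ∀ η χ : ℝ → Vec N, ContinuousOn η (Icc (-R) T) → ContinuousOn χ (Icc (-R) 0) →
        wNorm p (-R) T (Afun f y φ η χ r (-R) - Afun f y0 φ0 η χ r (-R))
            (fun t => Afun' f y φ η χ r t - Afun' f y0 φ0 η χ r t) ≤
          ε * (cNorm (-R) T η + cNorm (-R) 0 χ) := by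
  have hTp : 0 < T ^ (1 / p) := Real.rpow_pos_of_pos hT _
  have hK := isCompact_Icc.image_of_continuousOn (continuousOn_rho hr hy0 hφ0)
  obtain ⟨δ, hδ, hDfδ⟩ := hK.exists_forall_dist_le_of_continuous hDf (div_pos hε hTp)
  refine ⟨δ, hδ, fun y φ hy hφ hclose η χ hη hχ => ?_⟩
  refine (wNorm_Afun_sub_le hp hT hr hη hχ (K := ε / T ^ (1 / p)) fun t ht => ?_).trans_eq
    (by field_simp)
  rw [← dist_eq_norm]
  refine hDfδ _ ⟨t, ht, rfl⟩ _ ?_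
  rw [dist_eq_norm, ← rho_sub]
  exact (norm_rho_le hr (hy.sub hy0) (hφ.sub hφ0) ht).trans hclose

end Delay
theorem stmt11_general (N : ℕ) (p : ℝ) (hp : 1 ≤ p) (R T : ℝ) (hT : 0 < T)
    (f : Vec N × Vec N → Vec N) (hf : ContDiff ℝ 1 f) (r : ℝ) (hr : r ∈ Set.Icc (0:ℝ) R) :
    -- (i) well-definedness
    (∀ y φ : ℝ → Vec N, ContinuousOn y (Set.Icc (-R) T) → ContinuousOn φ (Set.Icc (-R) 0) →
      HasW1pOn (Tmap f y φ r) (Tderiv f y φ r) p (-R) T ∧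
        ∀ η χ : ℝ → Vec N, ContinuousOn η (Set.Icc (-R) T) → ContinuousOn χ (Set.Icc (-R) 0) →
          HasW1pOn (Afun f y φ η χ r) (Afun' f y φ η χ r) p (-R) T) ∧
    -- (ii) Fréchet differentiability at every (y0, φ0), with derivative A
    (∀ y0 φ0 : ℝ → Vec N, ContinuousOn y0 (Set.Icc (-R) T) → ContinuousOn φ0 (Set.Icc (-R) 0) →
      ∀ ε > 0, ∃ δ > 0, ∀ η χ : ℝ → Vec N,
        ContinuousOn η (Set.Icc (-R) T) → ContinuousOn χ (Set.Icc (-R) 0) →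
        cNorm (-R) T η + cNorm (-R) 0 χ ≤ δ →
        wNorm p (-R) T
            (Tmap f (y0 + η) (φ0 + χ) r (-R) - Tmap f y0 φ0 r (-R) - Afun f y0 φ0 η χ r (-R))
            (fun t => Tderiv f (y0 + η) (φ0 + χ) r t - Tderiv f y0 φ0 r t -
              Afun' f y0 φ0 η χ r t) ≤
          ε * (cNorm (-R) T η + cNorm (-R) 0 χ)) ∧
    -- (iii) the operator-norm estimate
    (∀ y φ y0 φ0 : ℝ → Vec N,
      ContinuousOn y (Set.Icc (-R) T) → ContinuousOn φ (Set.Icc (-R) 0) →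
      ContinuousOn y0 (Set.Icc (-R) T) → ContinuousOn φ0 (Set.Icc (-R) 0) →
      ∀ η χ : ℝ → Vec N, ContinuousOn η (Set.Icc (-R) T) → ContinuousOn χ (Set.Icc (-R) 0) →
        wNorm p (-R) T (Afun f y φ η χ r (-R) - Afun f y0 φ0 η χ r (-R))
            (fun t => Afun' f y φ η χ r t - Afun' f y0 φ0 η χ r t) ≤
          2 * T ^ (1 / p) *
            sSup ((fun t => ‖fderiv ℝ f (rho y φ r t) - fderiv ℝ f (rho y0 φ0 r t)‖) ''
              Set.Icc (0:ℝ) T) *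
            (cNorm (-R) T η + cNorm (-R) 0 χ)) ∧
    -- (iv) continuity of the Fréchet derivative in operator norm
    (∀ y0 φ0 : ℝ → Vec N, ContinuousOn y0 (Set.Icc (-R) T) → ContinuousOn φ0 (Set.Icc (-R) 0) →
      ∀ ε > 0, ∃ δ > 0, ∀ y φ : ℝ → Vec N,
        ContinuousOn y (Set.Icc (-R) T) → ContinuousOn φ (Set.Icc (-R) 0) →
        cNorm (-R) T (fun t => y t - y0 t) + cNorm (-R) 0 (fun t => φ t - φ0 t) ≤ δ →
        ∀ η χ : ℝ → Vec N, ContinuousOn η (Set.Icc (-R) T) → ContinuousOn χ (Set.Icc (-R) 0) →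
          wNorm p (-R) T (Afun f y φ η χ r (-R) - Afun f y0 φ0 η χ r (-R))
              (fun t => Afun' f y φ η χ r t - Afun' f y0 φ0 η χ r t) ≤
            ε * (cNorm (-R) T η + cNorm (-R) 0 χ)) := by
  have hp0 : 0 < p := zero_lt_one.trans_le hp
  have hDf : Continuous (fderiv ℝ f) := hf.continuous_fderiv one_ne_zero
  exact ⟨fun y φ hy hφ => ⟨hasW1pOn_Tmap hT.le hf.continuous hr hy hφ,
      fun η χ hη hχ => hasW1pOn_Afun hT.le hDf hr hy hφ hη hχ⟩,
    fun y0 φ0 hy0 hφ0 ε hε => exists_wNorm_Tmap_remainder_le hp0 hT hf hr hy0 hφ0 hε,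
    fun y φ y0 φ0 hy hφ hy0 hφ0 η χ hη hχ =>
      wNorm_Afun_sub_le_sSup hp0 hT hDf hr hy hφ hy0 hφ0 hη hχ,
    fun y0 φ0 hy0 hφ0 ε hε => exists_wNorm_Afun_sub_le hp0 hT hDf hr hy0 hφ0 hε⟩

/-- for `f` of class `C^1` and fixed `r ∈ [0,R]`, the map
`𝒯(·,·,r) : C([−R,T],ℝ^N) × C([−R,0],ℝ^N) → W^{1,p}([−R,T],ℝ^N)` is continuously Fréchet
differentiable with derivative `A_{y,φ,r}`:
(i) `𝒯(y,φ,r)` and `A_{y,φ,r}(η,χ)` lie in `W^{1,p}([−R,T])`;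
(ii) at every `(y0,φ0)` the little-o property of Fréchet differentiability holds;
(iii) the operator-norm estimate
`‖A_{y,φ,r} − A_{y0,φ0,r}‖ ≤ 2T^{1/p} sup_{t∈[0,T]} ‖Df(ρ(y,φ,r,t)) − Df(ρ(y0,φ0,r,t))‖`
holds (expressed on each argument `(η,χ)` against the norm `‖η‖_C + ‖χ‖_C`);
(iv) `(y,φ) ↦ A_{y,φ,r}` is continuous in operator norm. -/
theorem stmt11 (N : ℕ) (hN : 1 ≤ N) (p : ℝ) (hp : 1 ≤ p) (R T : ℝ) (hR : 0 < R) (hT : 0 < T)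
    (f : Vec N × Vec N → Vec N) (hf : ContDiff ℝ 1 f) (r : ℝ) (hr : r ∈ Set.Icc (0:ℝ) R) :
    -- (i) well-definedness
    (∀ y φ : ℝ → Vec N, ContinuousOn y (Set.Icc (-R) T) → ContinuousOn φ (Set.Icc (-R) 0) →
      HasW1pOn (Tmap f y φ r) (Tderiv f y φ r) p (-R) T ∧
        ∀ η χ : ℝ → Vec N, ContinuousOn η (Set.Icc (-R) T) → ContinuousOn χ (Set.Icc (-R) 0) →
          HasW1pOn (Afun f y φ η χ r) (Afun' f y φ η χ r) p (-R) T) ∧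
    -- (ii) Fréchet differentiability at every (y0, φ0), with derivative A
    (∀ y0 φ0 : ℝ → Vec N, ContinuousOn y0 (Set.Icc (-R) T) → ContinuousOn φ0 (Set.Icc (-R) 0) →
      ∀ ε > 0, ∃ δ > 0, ∀ η χ : ℝ → Vec N,
        ContinuousOn η (Set.Icc (-R) T) → ContinuousOn χ (Set.Icc (-R) 0) →
        cNorm (-R) T η + cNorm (-R) 0 χ ≤ δ →
        wNorm p (-R) T
            (Tmap f (y0 + η) (φ0 + χ) r (-R) - Tmap f y0 φ0 r (-R) - Afun f y0 φ0 η χ r (-R))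
            (fun t => Tderiv f (y0 + η) (φ0 + χ) r t - Tderiv f y0 φ0 r t -
              Afun' f y0 φ0 η χ r t) ≤
          ε * (cNorm (-R) T η + cNorm (-R) 0 χ)) ∧
    -- (iii) the operator-norm estimate
    (∀ y φ y0 φ0 : ℝ → Vec N,
      ContinuousOn y (Set.Icc (-R) T) → ContinuousOn φ (Set.Icc (-R) 0) →
      ContinuousOn y0 (Set.Icc (-R) T) → ContinuousOn φ0 (Set.Icc (-R) 0) →
      ∀ η χ : ℝ → Vec N, ContinuousOn η (Set.Icc (-R) T) → ContinuousOn χ (Set.Icc (-R) 0) →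
        wNorm p (-R) T (Afun f y φ η χ r (-R) - Afun f y0 φ0 η χ r (-R))
            (fun t => Afun' f y φ η χ r t - Afun' f y0 φ0 η χ r t) ≤
          2 * T ^ (1 / p) *
            sSup ((fun t => ‖fderiv ℝ f (rho y φ r t) - fderiv ℝ f (rho y0 φ0 r t)‖) ''
              Set.Icc (0:ℝ) T) *
            (cNorm (-R) T η + cNorm (-R) 0 χ)) ∧
    -- (iv) continuity of the Fréchet derivative in operator norm
    (∀ y0 φ0 : ℝ → Vec N, ContinuousOn y0 (Set.Icc (-R) T) → ContinuousOn φ0 (Set.Icc (-R) 0) →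
      ∀ ε > 0, ∃ δ > 0, ∀ y φ : ℝ → Vec N,
        ContinuousOn y (Set.Icc (-R) T) → ContinuousOn φ (Set.Icc (-R) 0) →
        cNorm (-R) T (fun t => y t - y0 t) + cNorm (-R) 0 (fun t => φ t - φ0 t) ≤ δ →
        ∀ η χ : ℝ → Vec N, ContinuousOn η (Set.Icc (-R) T) → ContinuousOn χ (Set.Icc (-R) 0) →
          wNorm p (-R) T (Afun f y φ η χ r (-R) - Afun f y0 φ0 η χ r (-R))
              (fun t => Afun' f y φ η χ r t - Afun' f y0 φ0 η χ r t) ≤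
            ε * (cNorm (-R) T η + cNorm (-R) 0 χ)) :=
  stmt11_general N p hp R T hT f hf r hr
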